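/- arXiv:2603.09342 — 2 statements merged into one kernel-verified Lean document; each statement's English description precedes it below -/
import Mathlib

section
/- Let H ∈ ℝ^{n×n} be symmetric positive definite, f ∈ ℝⁿ, A ∈ ℝ^{m×n}, b ∈ ℝᵐ. If (x⋆, λ⋆) ∈ ℝⁿ × ℝᵐ satisfies the KKT conditions, then x⋆ is the unique global minimizer of the primal QP: A x⋆ ≤ b, J(x⋆) ≤ J(x) for every x with A x ≤ b, and any other minimizer equals x⋆. -/
/-!
Expand `J` around `x⋆` with `d = x - x⋆`: stationarity `H x⋆ + f = -Aᵀλ⋆` turns the linear term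
of `J(x) - J(x⋆)` into `-λ⋆ ⬝ (A d)`, and complementary slackness rewrites this as
`-λ⋆ ⬝ (A x - b)`, which is nonnegative on the feasible set since `λ⋆ ≥ 0`. Hence
`J x ≥ J x⋆ + ½ (x - x⋆)ᵀ H (x - x⋆)`, and positive definiteness of `H` gives uniqueness.
-/

open Matrix

variable {ι κ : Type*} [Fintype ι] [Fintype κ]

noncomputable def qpObjective (H : Matrix ι ι ℝ) (f x : ι → ℝ) : ℝ :=
  1 / 2 * (x ⬝ᵥ H *ᵥ x) + f ⬝ᵥ x

lemma dotProduct_nonpos_of_nonneg_of_nonpos {v w : κ → ℝ} (hv : 0 ≤ v) (hw : w ≤ 0) :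
    v ⬝ᵥ w ≤ 0 :=
  Finset.sum_nonpos fun i _ => mul_nonpos_of_nonneg_of_nonpos (hv i) (hw i)

lemma Matrix.IsSymm.add_dotProduct_mulVec_add {H : Matrix ι ι ℝ} (hH : H.IsSymm)
    (x d : ι → ℝ) :
    (x + d) ⬝ᵥ H *ᵥ (x + d) = x ⬝ᵥ H *ᵥ x + 2 * (H *ᵥ x ⬝ᵥ d) + d ⬝ᵥ H *ᵥ d := by
  have hcross : x ⬝ᵥ H *ᵥ d = H *ᵥ x ⬝ᵥ d := by
    rw [dotProduct_mulVec, ← mulVec_transpose, hH.eq, dotProduct_comm]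
  rw [mulVec_add, dotProduct_add, add_dotProduct, add_dotProduct, hcross,
    dotProduct_comm d (H *ᵥ x)]
  ring

lemma Matrix.IsSymm.qpObjective_add {H : Matrix ι ι ℝ} (hH : H.IsSymm) (f x d : ι → ℝ) :
    qpObjective H f (x + d) =
      qpObjective H f x + (H *ᵥ x + f) ⬝ᵥ d + 1 / 2 * (d ⬝ᵥ H *ᵥ d) := by
  simp only [qpObjective, hH.add_dotProduct_mulVec_add, dotProduct_add, add_dotProduct]
  ring

lemma Matrix.IsSymm.qpObjective_eq_of_kkt {H : Matrix ι ι ℝ} (hH : H.IsSymm) {f : ι → ℝ}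
    {A : Matrix κ ι ℝ} {b : κ → ℝ} {xstar : ι → ℝ} {lamstar : κ → ℝ}
    (hstat : H *ᵥ xstar + Aᵀ *ᵥ lamstar = -f) (hcomp : lamstar ⬝ᵥ (A *ᵥ xstar - b) = 0)
    (x : ι → ℝ) :
    qpObjective H f x = qpObjective H f xstar
      + 1 / 2 * ((x - xstar) ⬝ᵥ H *ᵥ (x - xstar)) - lamstar ⬝ᵥ (A *ᵥ x - b) := by
  have hgrad : H *ᵥ xstar + f = -(Aᵀ *ᵥ lamstar) := by
    rw [eq_neg_iff_add_eq_zero, add_right_comm, hstat, neg_add_cancel]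
  have hlin : (H *ᵥ xstar + f) ⬝ᵥ (x - xstar) = -(lamstar ⬝ᵥ (A *ᵥ x - b)) := by
    have hAd : A *ᵥ (x - xstar) = (A *ᵥ x - b) - (A *ᵥ xstar - b) := by
      rw [mulVec_sub]; abel
    rw [hgrad, neg_dotProduct, mulVec_transpose, ← dotProduct_mulVec, hAd, dotProduct_sub,
      hcomp, sub_zero]
  rw [← add_sub_cancel xstar x, hH.qpObjective_add, hlin, add_sub_cancel_left]
  ring

lemma Matrix.PosSemidef.qpObjective_add_le_of_kkt {H : Matrix ι ι ℝ} (hH : H.PosSemidef)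
    {f : ι → ℝ} {A : Matrix κ ι ℝ} {b : κ → ℝ} {xstar : ι → ℝ} {lamstar : κ → ℝ}
    (hstat : H *ᵥ xstar + Aᵀ *ᵥ lamstar = -f) (hdual : 0 ≤ lamstar)
    (hcomp : lamstar ⬝ᵥ (A *ᵥ xstar - b) = 0) {x : ι → ℝ} (hx : A *ᵥ x ≤ b) :
    qpObjective H f xstar + 1 / 2 * ((x - xstar) ⬝ᵥ H *ᵥ (x - xstar)) ≤ qpObjective H f x := by
  have hsymm : H.IsSymm := by
    simpa [IsSymm, conjTranspose_eq_transpose_of_trivial] using hH.isHermitian.eq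
  have hslack : lamstar ⬝ᵥ (A *ᵥ x - b) ≤ 0 :=
    dotProduct_nonpos_of_nonneg_of_nonpos hdual (sub_nonpos.mpr hx)
  rw [hsymm.qpObjective_eq_of_kkt hstat hcomp x]
  linarith

/-- If `(x⋆, λ⋆)` satisfies the KKT conditions of the primal QP with
`H` symmetric positive definite, then `x⋆` is the unique global minimizer of the
primal QP. -/
theorem qp_kkt_implies_unique_global_minimizer
    (n m : ℕ) (H : Matrix (Fin n) (Fin n) ℝ) (hH : H.PosDef)
    (f : Fin n → ℝ) (A : Matrix (Fin m) (Fin n) ℝ) (b : Fin m → ℝ)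
    (J : (Fin n → ℝ) → ℝ)
    (hJ : J = fun x => (1 / 2) * (x ⬝ᵥ H.mulVec x) + f ⬝ᵥ x)
    (xstar : Fin n → ℝ) (lamstar : Fin m → ℝ)
    (hstat : H.mulVec xstar + Aᵀ.mulVec lamstar = -f)
    (hprimal : A.mulVec xstar ≤ b)
    (hdual : 0 ≤ lamstar)
    (hcomp : ∀ i : Fin m, lamstar i * (A.mulVec xstar i - b i) = 0) :
    A.mulVec xstar ≤ b ∧
      (∀ x : Fin n → ℝ, A.mulVec x ≤ b → J xstar ≤ J x) ∧
      (∀ y : Fin n → ℝ, A.mulVec y ≤ b →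
        (∀ x : Fin n → ℝ, A.mulVec x ≤ b → J y ≤ J x) → y = xstar) := by
  obtain rfl : J = qpObjective H f := hJ
  have hcomp' : lamstar ⬝ᵥ (A *ᵥ xstar - b) = 0 := Finset.sum_eq_zero fun i _ => hcomp i
  have hbound := fun x (hx : A *ᵥ x ≤ b) =>
    hH.posSemidef.qpObjective_add_le_of_kkt hstat hdual hcomp' hx
  refine ⟨hprimal, fun x hx => ?_, fun y hy hmin => ?_⟩
  · have hnonneg := hH.posSemidef.dotProduct_mulVec_nonneg (x - xstar)
    rw [star_trivial] at hnonneg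
    linarith [hbound x hx]
  · by_contra hne
    have hpos := hH.dotProduct_mulVec_pos (sub_ne_zero.mpr hne)
    rw [star_trivial] at hpos
    linarith [hbound y hy, hmin xstar hprimal]
end

section
/- Strong duality via complementarity: let H ∈ ℝ^{n×n} be symmetric positive definite, f ∈ ℝⁿ, A ∈ ℝ^{m×n}, b ∈ ℝᵐ. Suppose λ⋆ ≥ 0, set x⋆ = −H⁻¹(f + Aᵀλ⋆), and suppose A x⋆ ≤ b and (λ⋆)ᵀ(A x⋆ − b) = 0. Then J(x⋆) = −D(λ⋆) − (1/2)·fᵀH⁻¹f, x⋆ minimizes J over {x : A x ≤ b}, and λ⋆ minimizes D over {λ ∈ ℝᵐ : λ ≥ 0}. -/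
/-!
Write `x(λ) = -H⁻¹(f + Aᵀλ)` and `L(x, λ) = J(x) + λᵀ(Ax - b)`. Completing the square in `x`
gives `L(x, λ) = ½ (x - x(λ))ᵀH(x - x(λ)) - D(λ) - ½ fᵀH⁻¹f`, so for feasible `x` and `λ ≥ 0`
we get weak duality `-D(λ) - ½ fᵀH⁻¹f ≤ L(x, λ) ≤ J(x)`. Complementarity makes
`L(x⋆, λ⋆) = J(x⋆)`, so weak duality is an equality at `(x⋆, λ⋆)`, and both optimality
statements follow from weak duality.
-/

open Matrix

variable {ι κ : Type*} [Fintype ι] [Fintype κ]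

theorem Matrix.IsSymm.dotProduct_mulVec_comm {R : Type*} [CommSemiring R] {M : Matrix ι ι R}
    (hM : M.IsSymm) (x y : ι → R) : x ⬝ᵥ M *ᵥ y = y ⬝ᵥ M *ᵥ x := by
  simpa only [hM.eq] using dotProduct_transpose_mulVec M x y

theorem Matrix.IsSymm.half_dotProduct_mulVec_add_dotProduct [DecidableEq ι] {H : Matrix ι ι ℝ}
    (hsymm : H.IsSymm) (hdet : IsUnit H.det) (q x : ι → ℝ) :
    1 / 2 * (x ⬝ᵥ H *ᵥ x) + q ⬝ᵥ x =
      1 / 2 * ((x + H⁻¹ *ᵥ q) ⬝ᵥ H *ᵥ (x + H⁻¹ *ᵥ q)) - 1 / 2 * (q ⬝ᵥ H⁻¹ *ᵥ q) := by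
  have hHq : H *ᵥ H⁻¹ *ᵥ q = q := by rw [mulVec_mulVec, mul_nonsing_inv H hdet, one_mulVec]
  have hcross : H⁻¹ *ᵥ q ⬝ᵥ H *ᵥ x = q ⬝ᵥ x := by
    rw [hsymm.dotProduct_mulVec_comm, hHq, dotProduct_comm]
  simp only [mulVec_add, add_dotProduct, dotProduct_add, hHq, hcross, dotProduct_comm x q,
    dotProduct_comm (H⁻¹ *ᵥ q) q]
  ring

namespace QP

variable (H : Matrix ι ι ℝ) (f : ι → ℝ) (A : Matrix κ ι ℝ) (b : κ → ℝ)

noncomputable def objective (x : ι → ℝ) : ℝ :=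
  1 / 2 * (x ⬝ᵥ H *ᵥ x) + f ⬝ᵥ x

noncomputable def lagrangian (x : ι → ℝ) (lam : κ → ℝ) : ℝ :=
  objective H f x + lam ⬝ᵥ (A *ᵥ x - b)

variable {H f A b} in
theorem lagrangian_le_objective {x : ι → ℝ} {lam : κ → ℝ} (hx : A *ᵥ x ≤ b) (hlam : 0 ≤ lam) :
    lagrangian H f A b x lam ≤ objective H f x := by
  have := dotProduct_le_dotProduct_of_nonneg_left hx hlam
  rw [lagrangian, dotProduct_sub]
  linarith

variable [DecidableEq ι]

noncomputable def dualObjective (lam : κ → ℝ) : ℝ :=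
  1 / 2 * (lam ⬝ᵥ (A * H⁻¹ * Aᵀ) *ᵥ lam) + (b + A *ᵥ H⁻¹ *ᵥ f) ⬝ᵥ lam

noncomputable def lagrangianArgmin (lam : κ → ℝ) : ι → ℝ :=
  -(H⁻¹ *ᵥ (f + Aᵀ *ᵥ lam))

variable {H}

theorem dualObjective_eq (hsymm : H.IsSymm) (lam : κ → ℝ) :
    dualObjective H f A b lam =
      1 / 2 * ((f + Aᵀ *ᵥ lam) ⬝ᵥ H⁻¹ *ᵥ (f + Aᵀ *ᵥ lam)) + b ⬝ᵥ lam
        - 1 / 2 * (f ⬝ᵥ H⁻¹ *ᵥ f) := by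
  have hquad : lam ⬝ᵥ (A * H⁻¹ * Aᵀ) *ᵥ lam = Aᵀ *ᵥ lam ⬝ᵥ H⁻¹ *ᵥ Aᵀ *ᵥ lam := by
    rw [← mulVec_mulVec, ← mulVec_mulVec, ← dotProduct_transpose_mulVec, dotProduct_comm]
  have hlin : A *ᵥ H⁻¹ *ᵥ f ⬝ᵥ lam = f ⬝ᵥ H⁻¹ *ᵥ Aᵀ *ᵥ lam := by
    rw [dotProduct_comm, ← dotProduct_transpose_mulVec, dotProduct_comm,
      hsymm.inv.dotProduct_mulVec_comm]
  have hcross : Aᵀ *ᵥ lam ⬝ᵥ H⁻¹ *ᵥ f = f ⬝ᵥ H⁻¹ *ᵥ Aᵀ *ᵥ lam :=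
    hsymm.inv.dotProduct_mulVec_comm _ _
  rw [dualObjective, hquad, add_dotProduct, hlin]
  simp only [mulVec_add, add_dotProduct, dotProduct_add, hcross]
  ring

theorem lagrangian_eq (hsymm : H.IsSymm) (hdet : IsUnit H.det) (x : ι → ℝ) (lam : κ → ℝ) :
    lagrangian H f A b x lam =
      1 / 2 * ((x - lagrangianArgmin H f A lam) ⬝ᵥ H *ᵥ (x - lagrangianArgmin H f A lam))
        - dualObjective H f A b lam - 1 / 2 * (f ⬝ᵥ H⁻¹ *ᵥ f) := by
  have hcoupling : lam ⬝ᵥ A *ᵥ x = Aᵀ *ᵥ lam ⬝ᵥ x := by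
    rw [← dotProduct_transpose_mulVec, dotProduct_comm]
  have hsquare := hsymm.half_dotProduct_mulVec_add_dotProduct hdet (f + Aᵀ *ᵥ lam) x
  rw [lagrangian, objective, dualObjective_eq f A b hsymm, lagrangianArgmin, sub_neg_eq_add,
    dotProduct_sub, hcoupling, dotProduct_comm lam b]
  rw [add_dotProduct] at hsquare
  linarith

theorem neg_dualObjective_le_lagrangian (hH : H.PosDef) (x : ι → ℝ) (lam : κ → ℝ) :
    -dualObjective H f A b lam - 1 / 2 * (f ⬝ᵥ H⁻¹ *ᵥ f) ≤ lagrangian H f A b x lam := by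
  have hsymm : H.IsSymm := isHermitian_iff_isSymm.mp hH.isHermitian
  have hdet : IsUnit H.det := (isUnit_iff_isUnit_det H).mp hH.isUnit
  have hnonneg := hH.posSemidef.dotProduct_mulVec_nonneg (x - lagrangianArgmin H f A lam)
  rw [star_trivial] at hnonneg
  rw [lagrangian_eq f A b hsymm hdet]
  linarith

theorem lagrangian_lagrangianArgmin (hH : H.PosDef) (lam : κ → ℝ) :
    lagrangian H f A b (lagrangianArgmin H f A lam) lam =
      -dualObjective H f A b lam - 1 / 2 * (f ⬝ᵥ H⁻¹ *ᵥ f) := by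
  rw [lagrangian_eq f A b (isHermitian_iff_isSymm.mp hH.isHermitian)
    ((isUnit_iff_isUnit_det H).mp hH.isUnit), sub_self, zero_dotProduct]
  ring

variable {A b} in
theorem neg_dualObjective_le_objective (hH : H.PosDef) {x : ι → ℝ} {lam : κ → ℝ}
    (hx : A *ᵥ x ≤ b) (hlam : 0 ≤ lam) :
    -dualObjective H f A b lam - 1 / 2 * (f ⬝ᵥ H⁻¹ *ᵥ f) ≤ objective H f x :=
  (neg_dualObjective_le_lagrangian f A b hH x lam).trans (lagrangian_le_objective hx hlam)

end QP

open QP in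
/-- Strong duality via complementarity: if `λ⋆ ≥ 0`,
`x⋆ = −H⁻¹(f + Aᵀλ⋆)` is primal feasible and `(λ⋆)ᵀ(Ax⋆ − b) = 0`, then
`J(x⋆) = −D(λ⋆) − (1/2)·fᵀH⁻¹f`, `x⋆` minimizes the primal QP and `λ⋆`
minimizes the dual QP. -/
theorem qp_strong_duality_via_complementarity
    (n m : ℕ) (H : Matrix (Fin n) (Fin n) ℝ) (hH : H.PosDef)
    (f : Fin n → ℝ) (A : Matrix (Fin m) (Fin n) ℝ) (b : Fin m → ℝ)
    (J : (Fin n → ℝ) → ℝ)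
    (hJ : J = fun x => (1 / 2) * (x ⬝ᵥ H.mulVec x) + f ⬝ᵥ x)
    (D : (Fin m → ℝ) → ℝ)
    (hD : D = fun lam => (1 / 2) * (lam ⬝ᵥ (A * H⁻¹ * Aᵀ).mulVec lam)
        + (b + A.mulVec (H⁻¹.mulVec f)) ⬝ᵥ lam)
    (lamstar : Fin m → ℝ) (hlam : 0 ≤ lamstar)
    (xstar : Fin n → ℝ)
    (hx : xstar = -(H⁻¹.mulVec (f + Aᵀ.mulVec lamstar)))
    (hfeas : A.mulVec xstar ≤ b)
    (hcomp : lamstar ⬝ᵥ (A.mulVec xstar - b) = 0) :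
    J xstar = -D lamstar - (1 / 2) * (f ⬝ᵥ H⁻¹.mulVec f) ∧
      (∀ x : Fin n → ℝ, A.mulVec x ≤ b → J xstar ≤ J x) ∧
      (∀ lam : Fin m → ℝ, 0 ≤ lam → D lamstar ≤ D lam) := by
  obtain rfl : J = objective H f := hJ
  obtain rfl : D = dualObjective H f A b := hD
  have hxstar : xstar = lagrangianArgmin H f A lamstar := hx
  have hvalue :
      objective H f xstar = -dualObjective H f A b lamstar - 1 / 2 * (f ⬝ᵥ H⁻¹ *ᵥ f) := by
    rw [← lagrangian_lagrangianArgmin f A b hH, ← hxstar, lagrangian, hcomp, add_zero]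
  refine ⟨hvalue, fun x hxfeas => ?_, fun lam hlam' => ?_⟩
  · exact hvalue ▸ neg_dualObjective_le_objective f hH hxfeas hlam
  · linarith [neg_dualObjective_le_objective f hH hfeas hlam']
end
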